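/- For every β > 0 and every p > 0 there exists a constant C > 0 (depending only on β and p) such that for all z ∈ ℝ² and all s > 0, ∫_{ℝ²} K₀(√(2β) ‖x‖)^{−p} · (2πs)^{−1} e^{−‖x − z‖²/(2s)} dx ≤ C · e^{C(‖z‖ + s)}. -/

import Mathlib

open MeasureTheory Filter Set Topology

/-!
Restricting the integral defining `K₀(x)` to `t ∈ (0, 1]`, where `cosh t ≤ 2`, gives
`K₀(x) ≥ e^{-2x}`, hence `K₀(c‖x‖)^{-p} ≤ e^{a‖x‖}` with `a = 2cp`. By the triangle
inequality and `a r ≤ a² s + r² / (4s)`, the Gaussian weight of variance `s` absorbs this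
growth at the price of the factor `e^{a‖z‖ + a² s}` and of doubling the variance; the
remaining Gaussian integrates to `2`.
-/

/-- Macdonald function `K₀`, via its integral representation. -/
noncomputable def K0 (x : ℝ) : ℝ := ∫ t in Set.Ioi (0 : ℝ), Real.exp (-x * Real.cosh t)

open Real

lemma K0_nonneg (x : ℝ) : 0 ≤ K0 x :=
  setIntegral_nonneg measurableSet_Ioi fun _ _ => (exp_pos _).le

lemma integrableOn_exp_neg_mul_cosh {x : ℝ} (hx : 0 < x) :
    IntegrableOn (fun t => exp (-x * cosh t)) (Ioi 0) := by
  refine (exp_neg_integrableOn_Ioi 0 hx).mono' (by fun_prop) ?_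
  filter_upwards [ae_restrict_mem measurableSet_Ioi] with t ht
  have ht_le_cosh : t ≤ cosh t := (self_le_sinh_iff.mpr ht.le).trans (sinh_lt_cosh t).le
  rw [norm_eq_abs, abs_exp, exp_le_exp]
  nlinarith

lemma cosh_le_two {t : ℝ} (ht : |t| ≤ 1) : cosh t ≤ 2 := by
  have hcosh_mono : cosh t ≤ cosh 1 := by rwa [cosh_le_cosh, abs_one]
  have hcosh_one : cosh 1 ≤ 2 := by
    have hexp_neg_one : exp (-1) < 1 := exp_lt_one_iff.mpr (by norm_num)
    rw [cosh_eq]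
    linarith [exp_one_lt_d9]
  exact hcosh_mono.trans hcosh_one

lemma exp_neg_two_mul_le_K0 {x : ℝ} (hx : 0 < x) : exp (-(2 * x)) ≤ K0 x := by
  have hint := integrableOn_exp_neg_mul_cosh hx
  calc exp (-(2 * x)) = ∫ _ in Ioc (0 : ℝ) 1, exp (-(2 * x)) := by simp
    _ ≤ ∫ t in Ioc (0 : ℝ) 1, exp (-x * cosh t) := by
        refine setIntegral_mono_on (by simp) (hint.mono_set Ioc_subset_Ioi_self)
          measurableSet_Ioc fun t ht => exp_le_exp.mpr ?_
        nlinarith [cosh_le_two (abs_le.mpr ⟨by linarith [ht.1], ht.2⟩)]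
    _ ≤ K0 x :=
        setIntegral_mono_set hint (ae_restrict_of_forall_mem measurableSet_Ioi fun _ _ =>
          (exp_pos _).le) (Eventually.of_forall Ioc_subset_Ioi_self)

lemma K0_rpow_neg_le_exp {p y : ℝ} (hp : 0 ≤ p) (hy : 0 ≤ y) :
    K0 y ^ (-p) ≤ exp (2 * p * y) := by
  rcases hy.eq_or_lt with rfl | hy
  · -- `K0 0` is the Bochner integral of the non-integrable constant `1`, hence `0`.
    have hK0_zero : K0 0 = 0 := by simp [K0, measureReal_def]
    simpa [hK0_zero] using zero_rpow_le_one (-p)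
  · calc K0 y ^ (-p) ≤ exp (-(2 * y)) ^ (-p) :=
          rpow_le_rpow_of_nonpos (exp_pos _) (exp_neg_two_mul_le_K0 hy) (by linarith)
      _ = exp (2 * p * y) := by rw [← exp_mul]; ring_nf

lemma mul_sub_sq_div_le (a r : ℝ) {s : ℝ} (hs : 0 < s) :
    a * r - r ^ 2 / (2 * s) ≤ a ^ 2 * s - (4 * s)⁻¹ * r ^ 2 := by
  have hamgm : a * r ≤ a ^ 2 * s + r ^ 2 / (4 * s) := by
    rw [← sub_nonneg]
    have : a ^ 2 * s + r ^ 2 / (4 * s) - a * r = (r - 2 * a * s) ^ 2 / (4 * s) := by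
      field_simp; ring
    rw [this]; positivity
  have hsplit : r ^ 2 / (2 * s) = r ^ 2 / (4 * s) + (4 * s)⁻¹ * r ^ 2 := by
    field_simp; ring
  linarith

lemma K0_rpow_neg_mul_exp_le {E : Type*} [SeminormedAddCommGroup E] {c p s : ℝ}
    (hc : 0 ≤ c) (hp : 0 ≤ p) (hs : 0 < s) (x z : E) :
    K0 (c * ‖x‖) ^ (-p) * exp (-‖x - z‖ ^ 2 / (2 * s))
      ≤ exp (2 * c * p * ‖z‖ + (2 * c * p) ^ 2 * s)
        * exp (-(4 * s)⁻¹ * ‖x - z‖ ^ 2) := by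
  set a := 2 * c * p with ha_def
  have ha : 0 ≤ a := by positivity
  have hgrowth : K0 (c * ‖x‖) ^ (-p) ≤ exp (a * ‖x‖) :=
    (K0_rpow_neg_le_exp hp (by positivity)).trans_eq (by rw [ha_def]; ring_nf)
  have htriangle : a * ‖x‖ ≤ a * ‖z‖ + a * ‖x - z‖ := by
    rw [← mul_add, add_comm]
    exact mul_le_mul_of_nonneg_left (norm_le_norm_sub_add x z) ha
  have hexponent := mul_sub_sq_div_le a ‖x - z‖ hs
  calc K0 (c * ‖x‖) ^ (-p) * exp (-‖x - z‖ ^ 2 / (2 * s))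
      ≤ exp (a * ‖x‖) * exp (-‖x - z‖ ^ 2 / (2 * s)) := by gcongr
    _ ≤ exp (a * ‖z‖ + a ^ 2 * s) * exp (-(4 * s)⁻¹ * ‖x - z‖ ^ 2) := by
        rw [← exp_add, ← exp_add, exp_le_exp, neg_div]
        linarith

section Gaussian

variable {V : Type*} [NormedAddCommGroup V] [InnerProductSpace ℝ V] [FiniteDimensional ℝ V]
  [MeasurableSpace V] [BorelSpace V]

lemma integral_exp_neg_mul_sq_norm_sub {b : ℝ} (hb : 0 < b) (z : V) :
    ∫ v : V, exp (-b * ‖v - z‖ ^ 2) = (π / b) ^ (Module.finrank ℝ V / 2 : ℝ) := by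
  rw [integral_sub_right_eq_self (fun v : V => exp (-b * ‖v‖ ^ 2)) z]
  exact GaussianFourier.integral_rexp_neg_mul_sq_norm hb

lemma integrable_exp_neg_mul_sq_norm_sub {b : ℝ} (hb : 0 < b) (z : V) :
    Integrable fun v : V => exp (-b * ‖v - z‖ ^ 2) :=
  Integrable.of_integral_ne_zero <| by
    rw [integral_exp_neg_mul_sq_norm_sub hb z]
    exact (rpow_pos_of_pos (div_pos pi_pos hb) _).ne'

end Gaussian

theorem K0_negative_moment_bound_general (β p : ℝ) (hp : 0 < p) :
    ∃ C : ℝ, 0 < C ∧ ∀ (z : EuclideanSpace ℝ (Fin 2)) (s : ℝ), 0 < s →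
      (∫ x : EuclideanSpace ℝ (Fin 2),
          K0 (Real.sqrt (2 * β) * ‖x‖) ^ (-p)
            * ((2 * Real.pi * s)⁻¹ * Real.exp (-‖x - z‖ ^ 2 / (2 * s))))
        ≤ C * Real.exp (C * (‖z‖ + s)) := by
  set a := 2 * √(2 * β) * p
  have ha : 0 ≤ a := by positivity
  refine ⟨2 + a + a ^ 2, by positivity, fun z s hs => ?_⟩
  have hb : 0 < (4 * s)⁻¹ := by positivity
  set M := exp (a * ‖z‖ + a ^ 2 * s)
  calc _ ≤ ∫ x : EuclideanSpace ℝ (Fin 2),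
          M * ((2 * π * s)⁻¹ * exp (-(4 * s)⁻¹ * ‖x - z‖ ^ 2)) := by
        refine integral_mono_of_nonneg (ae_of_all _ fun x => ?_)
          (((integrable_exp_neg_mul_sq_norm_sub hb z).const_mul _).const_mul _)
          (ae_of_all _ fun x => ?_)
        · exact mul_nonneg (rpow_nonneg (K0_nonneg _) _) (by positivity)
        · have hpointwise := K0_rpow_neg_mul_exp_le (sqrt_nonneg (2 * β)) hp.le hs x z
          dsimp only
          rw [mul_left_comm, mul_left_comm M]
          gcongr
    _ = 2 * M := by
        rw [integral_const_mul, integral_const_mul, integral_exp_neg_mul_sq_norm_sub hb]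
        norm_num [finrank_euclideanSpace_fin]
        field_simp
        ring
    _ ≤ (2 + a + a ^ 2) * exp ((2 + a + a ^ 2) * (‖z‖ + s)) := by
        refine mul_le_mul (by nlinarith) (exp_le_exp.mpr ?_) (exp_pos _).le (by positivity)
        nlinarith [norm_nonneg z]

/-- The negative-moment bound (3.25) from the proof of Lemma 3.11: for `β, p > 0`
there is `C > 0` (depending only on `β` and `p`) such that for all `z ∈ ℝ²` and
`s > 0`, `∫ K₀(√(2β)‖x‖)^{-p} (2πs)⁻¹ e^{-‖x−z‖²/(2s)} dx ≤ C e^{C(‖z‖+s)}`. -/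
theorem K0_negative_moment_bound (β p : ℝ) (hβ : 0 < β) (hp : 0 < p) :
    ∃ C : ℝ, 0 < C ∧ ∀ (z : EuclideanSpace ℝ (Fin 2)) (s : ℝ), 0 < s →
      (∫ x : EuclideanSpace ℝ (Fin 2),
          K0 (Real.sqrt (2 * β) * ‖x‖) ^ (-p)
            * ((2 * Real.pi * s)⁻¹ * Real.exp (-‖x - z‖ ^ 2 / (2 * s))))
        ≤ C * Real.exp (C * (‖z‖ + s)) :=
  K0_negative_moment_bound_general β p hp
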